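/- In SP_9, for every negative edge uv there exist exactly two vertices z such that uz is negative and vz is positive, and exactly two vertices z such that both uz and vz are positive. -/

import Mathlib

/-!
The positive edges of `SP_9` form the rook's graph `K₃ □ K₃`. In a rook's graph on `α × β`, two
non-adjacent vertices `(a, b)` and `(c, d)` have exactly the two common neighbours `(a, d)` and
`(c, b)`. Removing these from the `(|α| - 1) + (|β| - 1)` neighbours of `(c, d)` leaves
`|α| + |β| - 4` of them that are not adjacent to `(a, b)`, which is `2` when `|α| = |β| = 3`.
-/

/-- Vertices of `SP_9`, identified with `{0,1,2} × {0,1,2}`. -/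
abbrev V9 : Type := Fin 3 × Fin 3

/-- The edge `uv` of `SP_9` is positive: `u ≠ v` and they agree in exactly one coordinate. -/
abbrev pos9 (u v : V9) : Prop :=
  (u.1 = v.1 ∧ u.2 ≠ v.2) ∨ (u.1 ≠ v.1 ∧ u.2 = v.2)

/-- The edge `uv` of `SP_9` is negative: `u ≠ v` and it is not positive. -/
abbrev neg9 (u v : V9) : Prop := u ≠ v ∧ ¬ pos9 u v

open Finset SimpleGraph

instance {α β : Type*} {G : SimpleGraph α} {H : SimpleGraph β} [DecidableEq α] [DecidableEq β]
    [DecidableRel G.Adj] [DecidableRel H.Adj] : DecidableRel (G □ H).Adj :=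
  fun _ _ => decidable_of_iff' _ boxProd_adj

abbrev rookGraph (α β : Type*) : SimpleGraph (α × β) := ⊤ □ ⊤

section RookGraph

variable {α β : Type*} [Fintype α] [Fintype β] [DecidableEq α] [DecidableEq β] {u v : α × β}

theorem rookGraph_filter_adj_and_adj_eq (h₁ : u.1 ≠ v.1) (h₂ : u.2 ≠ v.2) :
    ({z | (rookGraph α β).Adj u z ∧ (rookGraph α β).Adj v z} : Finset (α × β)) =
      {(u.1, v.2), (v.1, u.2)} := by
  ext ⟨x, y⟩
  simp only [mem_filter, mem_univ, true_and, boxProd_adj, top_adj, mem_insert, mem_singleton,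
    Prod.mk.injEq]
  grind

theorem rookGraph_card_filter_adj_and_adj (h₁ : u.1 ≠ v.1) (h₂ : u.2 ≠ v.2) :
    #{z | (rookGraph α β).Adj u z ∧ (rookGraph α β).Adj v z} = 2 := by
  rw [rookGraph_filter_adj_and_adj_eq h₁ h₂, card_pair]
  simp [h₁]

theorem rookGraph_card_filter_not_adj_and_adj (h₁ : u.1 ≠ v.1) (h₂ : u.2 ≠ v.2) :
    #{z | u ≠ z ∧ ¬(rookGraph α β).Adj u z ∧ (rookGraph α β).Adj v z} =
      Fintype.card α + Fintype.card β - 4 := by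
  set N : Finset (α × β) := {z | (rookGraph α β).Adj v z} with hN
  have hdeg : #N = Fintype.card α - 1 + (Fintype.card β - 1) := by
    rw [hN, ← neighborFinset_eq_filter, card_neighborFinset_eq_degree, degree_boxProd,
      complete_graph_degree, complete_graph_degree]
  have hcommon : N.filter ((rookGraph α β).Adj u) =
      ({z | (rookGraph α β).Adj u z ∧ (rookGraph α β).Adj v z} : Finset (α × β)) := by
    rw [filter_filter]
    simp only [and_comm]
  have hvu : ¬(rookGraph α β).Adj v u := by simp [h₁.symm, h₂.symm]
  have hrest : N.filter (¬(rookGraph α β).Adj u ·) =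
      ({z | u ≠ z ∧ ¬(rookGraph α β).Adj u z ∧ (rookGraph α β).Adj v z} : Finset (α × β)) := by
    rw [filter_filter]
    refine filter_congr fun z _ => ⟨fun ⟨hv, hu⟩ => ⟨?_, hu, hv⟩, fun ⟨_, hu, hv⟩ => ⟨hv, hu⟩⟩
    rintro rfl
    exact hvu hv
  have hsplit := card_filter_add_card_filter_not (s := N) ((rookGraph α β).Adj u)
  have hα : 2 ≤ Fintype.card α := Fintype.one_lt_card_iff.mpr ⟨_, _, h₁⟩
  have hβ : 2 ≤ Fintype.card β := Fintype.one_lt_card_iff.mpr ⟨_, _, h₂⟩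
  rw [hcommon, hrest, rookGraph_card_filter_adj_and_adj h₁ h₂, hdeg] at hsplit
  omega

end RookGraph

theorem pos9_iff_rookGraph_adj {u v : V9} : pos9 u v ↔ (rookGraph (Fin 3) (Fin 3)).Adj u v := by
  simp only [boxProd_adj, top_adj]
  tauto

theorem sp9_neg_edge_counts :
    ∀ u v : V9, neg9 u v →
      (Finset.univ.filter (fun z : V9 => neg9 u z ∧ pos9 v z)).card = 2 ∧
      (Finset.univ.filter (fun z : V9 => pos9 u z ∧ pos9 v z)).card = 2 := by
  rintro u v ⟨hne, hnpos⟩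
  have h₁ : u.1 ≠ v.1 := fun h => hnpos (Or.inl ⟨h, fun h' => hne (Prod.ext h h')⟩)
  have h₂ : u.2 ≠ v.2 := fun h => hnpos (Or.inr ⟨fun h' => hne (Prod.ext h' h), h⟩)
  simp only [neg9, pos9_iff_rookGraph_adj, and_assoc]
  exact ⟨rookGraph_card_filter_not_adj_and_adj h₁ h₂, rookGraph_card_filter_adj_and_adj h₁ h₂⟩
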